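/- The averaged transverse single-nucleon response computed with a smeared Fermi distribution is well defined and strictly positive for every kinematics: let λ ≥ 0, κ > λ, τ = κ² − λ², ε₀ = κ·√((1+τ)/τ) − λ, let G_E ∈ ℝ and G_M ≠ 0, and let a, b, k_F, m > 0. Define n(ε) = a / (1 + exp((m·√(ε²−1) − k_F)/b)) for ε ≥ 1, and w_T(ε) = G_E²·[((ε+λ)/(ε₀+λ))² − 1] + τ·G_M²·[((ε+λ)/(ε₀+λ))² + 1]. Then the integral ∫_{ε₀}^{∞} n(ε)·w_T(ε) dε converges and is strictly positive. -/
import Mathlib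

open MeasureTheory

lemma sq_le_exp_aux {c x : ℝ} (hc : 0 < c) (hx : 0 ≤ x) :
    x ^ 2 ≤ 16 / c ^ 2 * Real.exp (c / 2 * x) := by
  have h1 : c / 4 * x ≤ Real.exp (c / 4 * x) := by
    have := Real.add_one_le_exp (c / 4 * x); linarith
  have h2 : x ≤ 4 / c * Real.exp (c / 4 * x) := by
    rw [div_mul_eq_mul_div, le_div_iff₀ hc]
    nlinarith
  have h3 : x ^ 2 ≤ (4 / c * Real.exp (c / 4 * x)) ^ 2 :=
    pow_le_pow_left₀ hx h2 2
  calc x ^ 2 ≤ (4 / c * Real.exp (c / 4 * x)) ^ 2 := h3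
    _ = 16 / c ^ 2 * (Real.exp (c / 4 * x) * Real.exp (c / 4 * x)) := by ring
    _ = 16 / c ^ 2 * Real.exp (c / 2 * x) := by rw [← Real.exp_add]; ring_nf

/-- The averaged transverse single-nucleon response computed with a smeared
Fermi distribution is well defined (integrable) and strictly positive for
every kinematics. -/
theorem averaged_wT_smeared_pos
    (lam κ τ ε0 : ℝ) (hlam : 0 ≤ lam) (hκ : lam < κ)
    (hτ : τ = κ ^ 2 - lam ^ 2)
    (hε0 : ε0 = κ * Real.sqrt ((1 + τ) / τ) - lam)
    (GE GM : ℝ) (hGM : GM ≠ 0)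
    (a b kF m : ℝ) (ha : 0 < a) (hb : 0 < b) (hkF : 0 < kF) (hm : 0 < m) :
    IntegrableOn
      (fun ε : ℝ =>
        (a / (1 + Real.exp ((m * Real.sqrt (ε ^ 2 - 1) - kF) / b))) *
          (GE ^ 2 * (((ε + lam) / (ε0 + lam)) ^ 2 - 1)
            + τ * GM ^ 2 * (((ε + lam) / (ε0 + lam)) ^ 2 + 1)))
      (Set.Ioi ε0)
    ∧ 0 < ∫ ε in Set.Ioi ε0,
        (a / (1 + Real.exp ((m * Real.sqrt (ε ^ 2 - 1) - kF) / b))) *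
          (GE ^ 2 * (((ε + lam) / (ε0 + lam)) ^ 2 - 1)
            + τ * GM ^ 2 * (((ε + lam) / (ε0 + lam)) ^ 2 + 1)) := by
  have hκ0 : 0 < κ := lt_of_le_of_lt hlam hκ
  have hτ0 : 0 < τ := by nlinarith
  have hrat : 0 < (1 + τ) / τ := by positivity
  have hsq : 0 < Real.sqrt ((1 + τ) / τ) := Real.sqrt_pos.mpr hrat
  have hD : 0 < ε0 + lam := by rw [hε0]; simpa using mul_pos hκ0 hsq
  have hε01 : 1 ≤ ε0 := by
    have key : (1 + lam) ^ 2 ≤ κ ^ 2 * ((1 + τ) / τ) := by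
      rw [← mul_div_assoc, le_div_iff₀ hτ0]
      nlinarith [sq_nonneg (κ ^ 2 - lam * (1 + lam))]
    have h2 : 1 + lam ≤ κ * Real.sqrt ((1 + τ) / τ) := by
      have h3 : 1 + lam ≤ Real.sqrt (κ ^ 2 * ((1 + τ) / τ)) :=
        Real.le_sqrt_of_sq_le key
      rwa [Real.sqrt_mul (sq_nonneg κ), Real.sqrt_sq hκ0.le] at h3
    rw [hε0]; linarith
  set f : ℝ → ℝ := fun ε =>
    (a / (1 + Real.exp ((m * Real.sqrt (ε ^ 2 - 1) - kF) / b))) *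
      (GE ^ 2 * (((ε + lam) / (ε0 + lam)) ^ 2 - 1)
        + τ * GM ^ 2 * (((ε + lam) / (ε0 + lam)) ^ 2 + 1)) with hf
  have hden : ∀ ε : ℝ, (0:ℝ) < 1 + Real.exp ((m * Real.sqrt (ε ^ 2 - 1) - kF) / b) :=
    fun ε => by positivity
  have hGM2 : 0 < GM ^ 2 := by positivity
  -- f ε > 0 for ε > ε0
  have hfpos : ∀ ε ∈ Set.Ioi ε0, 0 < f ε := by
    intro ε hε
    simp only [Set.mem_Ioi] at hε
    have hr : 1 < (ε + lam) / (ε0 + lam) := by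
      rw [lt_div_iff₀ hD]; linarith
    set r2 : ℝ := ((ε + lam) / (ε0 + lam)) ^ 2 with hr2def
    have hr2 : 1 < r2 := by rw [hr2def]; nlinarith
    have hw : 0 < GE ^ 2 * (r2 - 1) + τ * GM ^ 2 * (r2 + 1) := by
      have hA : 0 ≤ GE ^ 2 * (r2 - 1) :=
        mul_nonneg (sq_nonneg _) (by linarith)
      have hB : 0 < τ * GM ^ 2 * (r2 + 1) :=
        mul_pos (mul_pos hτ0 hGM2) (by linarith)
      linarith
    exact mul_pos (by positivity) hw
  -- continuity of f
  have hcont : Continuous f := by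
    apply Continuous.mul
    · apply Continuous.div continuous_const
      · fun_prop
      · intro x; exact (hden x).ne'
    · fun_prop
  set c : ℝ := m / b with hc
  have hc0 : 0 < c := by positivity
  set C : ℝ := a * Real.exp ((m + kF) / b) * (GE ^ 2 + τ * GM ^ 2) *
      (16 / c ^ 2 * Real.exp (c / 2 * lam) / (ε0 + lam) ^ 2 + 1) with hC
  have hbound : ∀ ε ∈ Set.Ioi ε0, ‖f ε‖ ≤ C * Real.exp (-(c / 2) * ε) := by
    intro ε hε
    simp only [Set.mem_Ioi] at hε
    have hε1 : 1 ≤ ε := le_trans hε01 hε.le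
    have hεl : 0 ≤ ε + lam := by linarith
    have hn : a / (1 + Real.exp ((m * Real.sqrt (ε ^ 2 - 1) - kF) / b))
        ≤ a * Real.exp ((m + kF) / b) * Real.exp (-c * ε) := by
      have h1 : a / (1 + Real.exp ((m * Real.sqrt (ε ^ 2 - 1) - kF) / b))
          ≤ a / Real.exp ((m * Real.sqrt (ε ^ 2 - 1) - kF) / b) := by
        apply div_le_div_of_nonneg_left ha.le (Real.exp_pos _)
          (by linarith [Real.exp_pos ((m * Real.sqrt (ε ^ 2 - 1) - kF) / b)])
      have hsqrt : ε - 1 ≤ Real.sqrt (ε ^ 2 - 1) := by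
        apply Real.le_sqrt_of_sq_le; nlinarith
      have hms : m * (ε - 1) ≤ m * Real.sqrt (ε ^ 2 - 1) :=
        mul_le_mul_of_nonneg_left hsqrt hm.le
      have h2 : -((m * Real.sqrt (ε ^ 2 - 1) - kF) / b) ≤ (m + kF) / b + (-c * ε) := by
        have heq : (m + kF) / b + (-c * ε) = (m + kF - m * ε) / b := by
          rw [hc]; field_simp; ring
        rw [heq, ← neg_div, div_le_div_iff₀ hb hb]
        have := mul_le_mul_of_nonneg_right
          (show -(m * Real.sqrt (ε ^ 2 - 1) - kF) ≤ m + kF - m * ε by linarith) hb.le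
        linarith
      calc a / (1 + Real.exp ((m * Real.sqrt (ε ^ 2 - 1) - kF) / b))
          ≤ a / Real.exp ((m * Real.sqrt (ε ^ 2 - 1) - kF) / b) := h1
        _ = a * Real.exp (-((m * Real.sqrt (ε ^ 2 - 1) - kF) / b)) := by
            rw [Real.exp_neg]; ring
        _ ≤ a * Real.exp ((m + kF) / b + (-c * ε)) :=
            mul_le_mul_of_nonneg_left (Real.exp_le_exp.mpr h2) ha.le
        _ = a * Real.exp ((m + kF) / b) * Real.exp (-c * ε) := by
            rw [Real.exp_add]; ring
    set r2 : ℝ := ((ε + lam) / (ε0 + lam)) ^ 2 with hr2def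
    have hr2 : 0 ≤ r2 := sq_nonneg _
    have hw : |GE ^ 2 * (r2 - 1) + τ * GM ^ 2 * (r2 + 1)|
        ≤ (GE ^ 2 + τ * GM ^ 2) * (r2 + 1) := by
      have hA : 0 ≤ GE ^ 2 * r2 := mul_nonneg (sq_nonneg _) hr2
      have hB : 0 ≤ τ * GM ^ 2 * (r2 + 1) :=
        mul_nonneg (mul_nonneg hτ0.le (sq_nonneg _)) (by linarith)
      have hexp : (GE ^ 2 + τ * GM ^ 2) * (r2 + 1)
          = GE ^ 2 * (r2 + 1) + τ * GM ^ 2 * (r2 + 1) := by ring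
      have hub := mul_le_mul_of_nonneg_left (show r2 - 1 ≤ r2 + 1 by linarith) (sq_nonneg GE)
      have hlb := mul_le_mul_of_nonneg_left (show -(r2 + 1) ≤ r2 - 1 by linarith) (sq_nonneg GE)
      have heq2 : GE ^ 2 * -(r2 + 1) = -(GE ^ 2 * (r2 + 1)) := by ring
      rw [abs_le]
      constructor
      · linarith [hlb, heq2, hB, hexp]
      · linarith [hub, hB, hexp]
    set X : ℝ := 16 / c ^ 2 * Real.exp (c / 2 * lam) / (ε0 + lam) ^ 2 with hX
    have hexpe : (1:ℝ) ≤ Real.exp (c / 2 * ε) := by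
      rw [Real.one_le_exp_iff]; positivity
    have h1 : (ε + lam) ^ 2 ≤ 16 / c ^ 2 * Real.exp (c / 2 * (ε + lam)) :=
      sq_le_exp_aux hc0 hεl
    have h2 : r2 ≤ X * Real.exp (c / 2 * ε) := by
      rw [hr2def, hX, div_pow]
      have heq : 16 / c ^ 2 * Real.exp (c / 2 * lam) / (ε0 + lam) ^ 2 * Real.exp (c / 2 * ε)
          = (16 / c ^ 2 * Real.exp (c / 2 * (ε + lam))) / (ε0 + lam) ^ 2 := by
        rw [show c / 2 * (ε + lam) = c / 2 * lam + c / 2 * ε by ring, Real.exp_add]; ring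
      rw [heq]
      exact div_le_div_of_nonneg_right h1 (by positivity)
    have hr2e : r2 + 1 ≤ (X + 1) * Real.exp (c / 2 * ε) := by
      calc r2 + 1 ≤ X * Real.exp (c / 2 * ε) + 1 := by linarith
        _ ≤ X * Real.exp (c / 2 * ε) + Real.exp (c / 2 * ε) := by linarith
        _ = (X + 1) * Real.exp (c / 2 * ε) := by ring
    have habs : ‖f ε‖ = (a / (1 + Real.exp ((m * Real.sqrt (ε ^ 2 - 1) - kF) / b))) *
        |GE ^ 2 * (r2 - 1) + τ * GM ^ 2 * (r2 + 1)| := by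
      rw [hf]
      simp only [Real.norm_eq_abs, abs_mul]
      congr 1
      exact abs_of_pos (by positivity)
    rw [habs]
    have hM : 0 ≤ GE ^ 2 + τ * GM ^ 2 := by positivity
    calc (a / (1 + Real.exp ((m * Real.sqrt (ε ^ 2 - 1) - kF) / b))) *
        |GE ^ 2 * (r2 - 1) + τ * GM ^ 2 * (r2 + 1)|
        ≤ (a * Real.exp ((m + kF) / b) * Real.exp (-c * ε)) *
          ((GE ^ 2 + τ * GM ^ 2) * ((X + 1) * Real.exp (c / 2 * ε))) := by
          apply mul_le_mul hn ?_ (abs_nonneg _) (by positivity)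
          exact le_trans hw (mul_le_mul_of_nonneg_left hr2e hM)
      _ = C * (Real.exp (-c * ε) * Real.exp (c / 2 * ε)) := by rw [hC, hX]; ring
      _ = C * Real.exp (-(c / 2) * ε) := by
          rw [← Real.exp_add]; ring_nf
  have hg : IntegrableOn (fun ε => C * Real.exp (-(c / 2) * ε)) (Set.Ioi ε0) :=
    (exp_neg_integrableOn_Ioi ε0 (by positivity : (0:ℝ) < c / 2)).const_mul C
  have hint : IntegrableOn f (Set.Ioi ε0) := by
    apply Integrable.mono' hg (hcont.aestronglyMeasurable.restrict)
    filter_upwards [ae_restrict_mem measurableSet_Ioi] with ε hε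
    exact hbound ε hε
  refine ⟨hint, ?_⟩
  rw [setIntegral_pos_iff_support_of_nonneg_ae ?_ hint]
  · refine lt_of_lt_of_le ?_ (measure_mono fun ε hε => ⟨(hfpos ε hε).ne', hε⟩)
    simp [Real.volume_Ioi]
  · filter_upwards [ae_restrict_mem measurableSet_Ioi] with ε hε
    exact (hfpos ε hε).le
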